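/- arXiv:2006.10365 — 4 statements merged into one kernel-verified Lean document; each statement's English description precedes it below -/
import Mathlib

section
/- Let L and R be nonempty finite sets of points in the plane that are strictly separated by a line, and let r > 0. If the boundaries of I_r(L) and I_r(R) are circles' arcs boundaries of convex regions, then the boundary circles ∂I_r(L) and ∂I_r(R) intersect in at most two points, provided neither region is contained in the other and both are nonempty. Formally: for any two distinct points p, q in ∂I_r(L) ∩ ∂I_r(R) (as boundaries of the convex sets), every point of ∂I_r(L) ∩ ∂I_r(R) is p or q — under the assumption that I_r(L) ⊄ I_r(R) and I_r(R) ⊄ I_r(L). -/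
/-!
Every common boundary point `w` lies on a circle of radius `r` about some `x ∈ L` and on one
about some `y ∈ R`, and both discs contain `I_r(L) ∩ I_r(R)`. Radially projecting the segment
`[x, y]` onto the circle of radius `r` about `w` moves the centre continuously from `x` to `y`;
where it crosses the separating line we get a circle of radius `r` through `w`, centred on the
line, whose open disc contains every other common boundary point. Three common boundary points
would give three such centres on the line; the middle one is a convex combination of the other
two, so its own boundary point, lying in both of their open discs, would lie in its open disc.
-/

open Metric RealInnerProductSpace

section PseudoMetric

variable {α : Type*} [PseudoMetricSpace α]

theorem exists_dist_eq_of_mem_frontier_biInter_closedBall {s : Finset α} {r : ℝ} {w : α}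
    (hw : w ∈ frontier (⋂ x ∈ s, closedBall x r)) : ∃ x ∈ s, dist w x = r := by
  have hle : ∀ x ∈ s, dist w x ≤ r := by
    simpa using (isClosed_biInter fun x _ => isClosed_closedBall).frontier_subset hw
  by_contra! hne
  refine hw.2 (interior_maximal (Set.iInter₂_mono fun x _ => ball_subset_closedBall)
    (isOpen_biInter_finset fun x _ => isOpen_ball) ?_)
  simp only [Set.mem_iInter₂, mem_ball]
  exact fun x hx => (hle x hx).lt_of_ne (hne x hx)

end PseudoMetric

section Normed

variable {E : Type*} [NormedAddCommGroup E] [NormedSpace ℝ E]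

theorem add_div_norm_smul_mem_sphere (w : E) {v : E} (hv : v ≠ 0) {r : ℝ} (hr : 0 ≤ r) :
    w + (r / ‖v‖) • v ∈ sphere w r := by
  rw [mem_sphere, dist_eq_norm, add_sub_cancel_left, norm_smul, Real.norm_of_nonneg
    (div_nonneg hr (norm_nonneg v)), div_mul_cancel₀ r (norm_ne_zero_iff.2 hv)]

theorem Wbtw.mem_ball {x y z w : E} {r : ℝ} (h : Wbtw ℝ x y z) (hx : w ∈ ball x r)
    (hz : w ∈ ball z r) : w ∈ ball y r := by
  rw [mem_ball_comm] at hx hz ⊢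
  exact (convex_ball w r).segment_subset hx hz (mem_segment_iff_wbtw.2 h)

theorem not_collinear_of_mem_sphere_of_subset_ball {c₁ c₂ c₃ w₁ w₂ w₃ : E} {r : ℝ}
    (h₁ : w₁ ∈ sphere c₁ r) (h₂ : w₂ ∈ sphere c₂ r) (h₃ : w₃ ∈ sphere c₃ r)
    (h₁' : {w₂, w₃} ⊆ ball c₁ r) (h₂' : {w₁, w₃} ⊆ ball c₂ r) (h₃' : {w₁, w₂} ⊆ ball c₃ r) :
    ¬ Collinear ℝ {c₁, c₂, c₃} := by
  simp only [Set.insert_subset_iff, Set.singleton_subset_iff] at h₁' h₂' h₃'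
  intro hcol
  rcases hcol.wbtw_or_wbtw_or_wbtw with h | h | h
  · exact (mem_ball.1 (h.mem_ball h₁'.1 h₃'.2)).ne (mem_sphere.1 h₂)
  · exact (mem_ball.1 (h.mem_ball h₂'.2 h₁'.2)).ne (mem_sphere.1 h₃)
  · exact (mem_ball.1 (h.mem_ball h₃'.1 h₂'.1)).ne (mem_sphere.1 h₁)

end Normed

section InnerProduct

variable {E : Type*} [NormedAddCommGroup E] [InnerProductSpace ℝ E]

theorem dist_sq_eq_of_mem_sphere {c w : E} {r : ℝ} (hc : c ∈ sphere w r) (z : E) :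
    dist c z ^ 2 = r ^ 2 - 2 * ⟪c - w, z - w⟫ + ‖z - w‖ ^ 2 := by
  rw [dist_eq_norm, ← sub_sub_sub_cancel_right c z w, norm_sub_sq_real, ← dist_eq_norm,
    mem_sphere.1 hc]

theorem sq_norm_sub_le_two_inner_of_dist_le {c w z : E} {r : ℝ} (hc : c ∈ sphere w r)
    (h : dist c z ≤ r) : ‖z - w‖ ^ 2 ≤ 2 * ⟪c - w, z - w⟫ := by
  have := dist_sq_eq_of_mem_sphere hc z
  have := pow_le_pow_left₀ dist_nonneg h 2
  linarith

theorem dist_add_div_norm_smul_lt {v w z : E} {r : ℝ} (hv : ‖v‖ < r) (hz : z ≠ w)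
    (hvz : ‖z - w‖ ^ 2 ≤ 2 * ⟪v, z - w⟫) : dist (w + (r / ‖v‖) • v) z < r := by
  have hzw : 0 < ‖z - w‖ ^ 2 := by have := sub_ne_zero.2 hz; positivity
  have hv0 : v ≠ 0 := by rintro rfl; rw [inner_zero_left] at hvz; linarith
  have hk : 1 < r / ‖v‖ := (one_lt_div (norm_pos_iff.2 hv0)).2 hv
  have hr : 0 < r := (norm_nonneg v).trans_lt hv
  have hc := add_div_norm_smul_mem_sphere w hv0 hr.le
  rw [← sq_lt_sq₀ dist_nonneg hr.le, dist_sq_eq_of_mem_sphere hc, add_sub_cancel_left,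
    real_inner_smul_left]
  nlinarith

theorem exists_center_apply_eq_of_subset_closedBall {w x y : E} {r : ℝ}
    (hx : w ∈ sphere x r) (hy : w ∈ sphere y r) {f : E → ℝ} (hf : Continuous f) {a : ℝ}
    (hfx : f x < a) (hfy : a < f y) {S : Set E} (hS : S.Nonempty) (hSw : w ∉ S)
    (hSx : S ⊆ closedBall x r) (hSy : S ⊆ closedBall y r) :
    ∃ c, w ∈ sphere c r ∧ f c = a ∧ S ⊆ ball c r := by
  rw [mem_sphere_comm] at hx hy
  set v : ℝ → E := fun t => (1 - t) • (x - w) + t • (y - w) with hv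
  -- On the circle about `w`, `dist c z ≤ r` is the half-plane condition
  -- `‖z - w‖² ≤ 2⟪c - w, z - w⟫`, which is linear in `c` and so holds along the segment.
  have hhalf : ∀ t ∈ Set.Icc (0 : ℝ) 1, ∀ z ∈ S, ‖z - w‖ ^ 2 ≤ 2 * ⟪v t, z - w⟫ := by
    rintro t ⟨ht0, ht1⟩ z hz
    have hxz := sq_norm_sub_le_two_inner_of_dist_le hx (mem_closedBall'.1 (hSx hz))
    have hyz := sq_norm_sub_le_two_inner_of_dist_le hy (mem_closedBall'.1 (hSy hz))
    simp only [hv, inner_add_left, real_inner_smul_left]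
    nlinarith
  obtain ⟨z₀, hz₀⟩ := hS
  have hv0 : ∀ t ∈ Set.Icc (0 : ℝ) 1, v t ≠ 0 := by
    intro t ht h
    have hz₀w : 0 < ‖z₀ - w‖ ^ 2 := by
      have := sub_ne_zero.2 (ne_of_mem_of_not_mem hz₀ hSw); positivity
    have := hhalf t ht z₀ hz₀
    rw [h, inner_zero_left] at this
    linarith
  have hr : 0 ≤ r := mem_sphere.1 hx ▸ dist_nonneg
  set c : ℝ → E := fun t => w + (r / ‖v t‖) • v t with hc
  have hcont : ContinuousOn (f ∘ c) (Set.Icc 0 1) := by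
    refine hf.comp_continuousOn (continuousOn_const.add (ContinuousOn.smul ?_ (by fun_prop)))
    exact continuousOn_const.div (by fun_prop) fun t ht => norm_ne_zero_iff.2 (hv0 t ht)
  have hc0 : c 0 = x := by
    have hx0 : x - w ≠ 0 := by simpa [hv] using hv0 0 (by simp)
    simp [hc, hv, ← mem_sphere_iff_norm.1 hx, hx0]
  have hc1 : c 1 = y := by
    have hy0 : y - w ≠ 0 := by simpa [hv] using hv0 1 (by simp)
    simp [hc, hv, ← mem_sphere_iff_norm.1 hy, hy0]
  obtain ⟨t, ⟨ht0, ht1⟩, hft⟩ := intermediate_value_Icc zero_le_one hcont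
    (show a ∈ Set.Icc (f (c 0)) (f (c 1)) from hc0 ▸ hc1 ▸ ⟨hfx.le, hfy.le⟩)
  have ht0' : 0 < t := ht0.lt_of_ne (by rintro rfl; exact hfx.ne (hc0 ▸ hft))
  have ht1' : t < 1 := ht1.lt_of_ne (by rintro rfl; exact hfy.ne' (hc1 ▸ hft))
  have hvt : ‖v t‖ < r := by
    refine norm_combo_lt_of_ne (mem_sphere_iff_norm.1 hx).le (mem_sphere_iff_norm.1 hy).le ?_
      (by linarith) ht0' (by ring)
    intro h
    rw [sub_left_inj.1 h] at hfx
    exact hfx.not_gt hfy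
  refine ⟨c t, mem_sphere_comm.1 (add_div_norm_smul_mem_sphere w (hv0 t ⟨ht0, ht1⟩) hr), hft,
    fun z hz => mem_ball_comm.1 (dist_add_div_norm_smul_lt hvt (ne_of_mem_of_not_mem hz hSw)
      (hhalf t ⟨ht0, ht1⟩ z hz))⟩

theorem exists_center_apply_eq_of_subset_frontier_inter {L R : Finset E} {r : ℝ} {f : E → ℝ}
    (hf : Continuous f) {a : ℝ} (hL : ∀ x ∈ L, f x < a) (hR : ∀ y ∈ R, a < f y) {w : E}
    {S : Set E} (hwS : insert w S ⊆ frontier (⋂ x ∈ L, closedBall x r) ∩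
      frontier (⋂ y ∈ R, closedBall y r)) (hS : S.Nonempty) (hSw : w ∉ S) :
    ∃ c, w ∈ sphere c r ∧ f c = a ∧ S ⊆ ball c r := by
  obtain ⟨hw, hSF⟩ := Set.insert_subset_iff.1 hwS
  obtain ⟨x, hxL, hx⟩ := exists_dist_eq_of_mem_frontier_biInter_closedBall hw.1
  obtain ⟨y, hyR, hy⟩ := exists_dist_eq_of_mem_frontier_biInter_closedBall hw.2
  have hclosed {s : Finset E} : IsClosed (⋂ x ∈ s, closedBall x r) :=
    isClosed_biInter fun _ _ => isClosed_closedBall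
  exact exists_center_apply_eq_of_subset_closedBall hx hy hf (hL x hxL) (hR y hyR) hS hSw
    (fun z hz => Set.biInter_subset_of_mem hxL (hclosed.frontier_subset (hSF hz).1))
    (fun z hz => Set.biInter_subset_of_mem hyR (hclosed.frontier_subset (hSF hz).2))

end InnerProduct

theorem collinear_of_forall_apply_eq {K V : Type*} [Field K] [AddCommGroup V] [Module K V]
    [FiniteDimensional K V] (hV : Module.finrank K V ≤ 2) {f : Module.Dual K V} (hf : f ≠ 0)
    {a : K} {s : Set V} (hs : ∀ c ∈ s, f c = a) : Collinear K s := by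
  have hspan : vectorSpan K s ≤ LinearMap.ker f := by
    rw [vectorSpan_def, Submodule.span_le]
    rintro _ ⟨c, hc, d, hd, rfl⟩
    simp [hs c hc, hs d hd]
  rw [collinear_iff_finrank_le_one]
  have := f.finrank_ker_add_one_of_ne_zero hf
  have := Submodule.finrank_mono hspan
  omega

theorem boundaries_intersect_at_most_twice_general (L R : Finset (EuclideanSpace ℝ (Fin 2)))
    (r : ℝ) (hL : L.Nonempty) (hR : R.Nonempty)
    (f : EuclideanSpace ℝ (Fin 2) →L[ℝ] ℝ) (a : ℝ)
    (hsep : (∀ p ∈ L, f p < a) ∧ (∀ q ∈ R, a < f q))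
    (IL IR : Set (EuclideanSpace ℝ (Fin 2)))
    (hIL : IL = ⋂ x ∈ L, closedBall x r) (hIR : IR = ⋂ x ∈ R, closedBall x r)
    (p q : EuclideanSpace ℝ (Fin 2)) (hp : p ∈ frontier IL ∩ frontier IR)
    (hq : q ∈ frontier IL ∩ frontier IR) (hpq : p ≠ q) :
    ∀ z ∈ frontier IL ∩ frontier IR, z = p ∨ z = q := by
  obtain ⟨hsepL, hsepR⟩ := hsep
  intro z hz
  by_contra! hzpq
  subst hIL hIR
  obtain ⟨cp, hcp, hfcp, hpball⟩ := exists_center_apply_eq_of_subset_frontier_inter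
    f.continuous hsepL hsepR (Set.insert_subset hp (Set.pair_subset hq hz))
    (Set.insert_nonempty _ _) (by simp [hpq, hzpq.1.symm])
  obtain ⟨cq, hcq, hfcq, hqball⟩ := exists_center_apply_eq_of_subset_frontier_inter
    f.continuous hsepL hsepR (Set.insert_subset hq (Set.pair_subset hp hz))
    (Set.insert_nonempty _ _) (by simp [hpq.symm, hzpq.2.symm])
  obtain ⟨cz, hcz, hfcz, hzball⟩ := exists_center_apply_eq_of_subset_frontier_inter
    f.continuous hsepL hsepR (Set.insert_subset hz (Set.pair_subset hp hq))
    (Set.insert_nonempty _ _) (by simp [hzpq])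
  obtain ⟨x, hx⟩ := hL
  obtain ⟨y, hy⟩ := hR
  have hf : f.toLinearMap ≠ 0 := fun h =>
    ((hsepL x hx).trans (hsepR y hy)).ne <| by
      simpa using (LinearMap.congr_fun h x).trans (LinearMap.congr_fun h y).symm
  exact not_collinear_of_mem_sphere_of_subset_ball hcp hcq hcz hpball hqball hzball
    (collinear_of_forall_apply_eq finrank_euclideanSpace_fin.le hf (a := a)
      (by simp [hfcp, hfcq, hfcz]))

/-- Let `L` and `R` be nonempty finite point sets in the plane strictly
separated by a line, and `r > 0`. If `I_r(L)` and `I_r(R)` are nonempty and neither is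
contained in the other, then the boundaries `∂I_r(L)` and `∂I_r(R)` intersect in at most
two points: any point of the intersection of the boundaries equals one of any two given
distinct intersection points. -/
theorem boundaries_intersect_at_most_twice (L R : Finset (EuclideanSpace ℝ (Fin 2)))
    (r : ℝ) (hr : 0 < r) (hL : L.Nonempty) (hR : R.Nonempty)
    (f : EuclideanSpace ℝ (Fin 2) →L[ℝ] ℝ) (a : ℝ)
    (hsep : (∀ p ∈ L, f p < a) ∧ (∀ q ∈ R, a < f q))
    (IL IR : Set (EuclideanSpace ℝ (Fin 2)))
    (hIL : IL = ⋂ x ∈ L, closedBall x r) (hIR : IR = ⋂ x ∈ R, closedBall x r)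
    (hILne : IL.Nonempty) (hIRne : IR.Nonempty)
    (hnsub₁ : ¬ IL ⊆ IR) (hnsub₂ : ¬ IR ⊆ IL)
    (p q : EuclideanSpace ℝ (Fin 2)) (hp : p ∈ frontier IL ∩ frontier IR)
    (hq : q ∈ frontier IL ∩ frontier IR) (hpq : p ≠ q) :
    ∀ z ∈ frontier IL ∩ frontier IR, z = p ∨ z = q :=
  boundaries_intersect_at_most_twice_general L R r hL hR f a hsep IL IR hIL hIR p q hp hq hpq
end

section
/- Let S be a finite set of n points in the plane and suppose two congruent closed disks D_1, D_2 of radius r cover S with D_1 ∩ D_2 containing a point o. Then there exist two rays μ_1, μ_2 emanating from o such that the open region between them on one side contains only points of S covered by D_1 and the other region contains only points covered by D_2; equivalently, S can be partitioned into S_1 ⊆ D_1 and S_2 ⊆ D_2 such that S_1 and S_2 are angularly separated around o by two rays. -/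
open Metric Real
open scoped Classical ComplexConjugate

/-!
Let `L` be the perpendicular bisector of `c₁c₂`. Because the radii are equal, a point of `D₁` on
the closed `c₂`-side of `L` lies in `D₂`, and symmetrically. Assume `o` is strictly on the
`c₁`-side, and let `[a, b] = D₂ ∩ L` be the common chord. A point of `D₁ ∪ D₂` in the wedge at `o`
spanned by `a` and `b` either lies on a segment from `o` to a point of the chord, hence in `D₂` by
convexity, or lies beyond `L`, hence in `D₂` by the first remark. Conversely, a point of `D₂ \ D₁`
lies beyond `L`, and the segment from `o` to it meets `L` inside `D₂`, i.e. on the chord; so it lies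
in the wedge. The wedge has opening angle less than `π`, so sending the points of `S` in the wedge
to `D₂` and the others to `D₁` separates them by the two rays through `a` and `b`. When `o` lies
on `L`, the wedge is replaced by the closed half-plane on the `c₂`-side of `L`.
-/

section SqDistDiff

variable {E : Type*} [NormedAddCommGroup E] [InnerProductSpace ℝ E]

noncomputable def sqDistDiff (c₁ c₂ : E) : E →ᵃ[ℝ] ℝ where
  toFun p := ‖p - c₁‖ ^ 2 - ‖p - c₂‖ ^ 2
  linear := 2 • innerₛₗ ℝ (c₂ - c₁)
  map_vadd' p v := by
    simp only [vadd_eq_add, add_sub_assoc, norm_add_sq_real, LinearMap.smul_apply,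
      innerₛₗ_apply_apply, inner_sub_right, real_inner_comm v]
    ring

theorem sqDistDiff_apply (c₁ c₂ p : E) :
    sqDistDiff c₁ c₂ p = ‖p - c₁‖ ^ 2 - ‖p - c₂‖ ^ 2 :=
  rfl

theorem sqDistDiff_nonneg_iff {c₁ c₂ p : E} :
    0 ≤ sqDistDiff c₁ c₂ p ↔ dist p c₂ ≤ dist p c₁ := by
  rw [sqDistDiff_apply, sub_nonneg, sq_le_sq₀ (norm_nonneg _) (norm_nonneg _), dist_eq_norm,
    dist_eq_norm]

theorem sqDistDiff_nonpos_iff {c₁ c₂ p : E} :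
    sqDistDiff c₁ c₂ p ≤ 0 ↔ dist p c₁ ≤ dist p c₂ := by
  rw [sqDistDiff_apply, sub_nonpos, sq_le_sq₀ (norm_nonneg _) (norm_nonneg _), dist_eq_norm,
    dist_eq_norm]

end SqDistDiff

section ConeOverChord

variable {E : Type*} [AddCommGroup E] [Module ℝ E] {D D' : Set E} {F : E →ᵃ[ℝ] ℝ}
  {o a b p : E}

theorem mem_of_sub_mem_cone_of_chord (hD : Convex ℝ D) (ho : o ∈ D) (hFo : F o ≤ 0)
    (ha : a ∈ D) (hb : b ∈ D) (hFa : F a = 0) (hFb : F b = 0)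
    (hD' : ∀ x ∈ D', 0 ≤ F x → x ∈ D) (hp : p ∈ D')
    (hcone : ∃ s t : ℝ, 0 ≤ s ∧ 0 ≤ t ∧ p - o = s • (a - o) + t • (b - o)) :
    p ∈ D := by
  obtain ⟨s, t, hs, ht, hpo⟩ := hcone
  rcases (add_nonneg hs ht).eq_or_lt with hσ | hσ
  · obtain ⟨rfl, rfl⟩ : s = 0 ∧ t = 0 := ⟨by linarith, by linarith⟩
    rw [zero_smul, zero_smul, add_zero, sub_eq_zero] at hpo
    exact hpo ▸ ho
  set q := (s / (s + t)) • a + (t / (s + t)) • b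
  have hsum : s / (s + t) + t / (s + t) = 1 := by field_simp
  have hq : q ∈ D := hD ha hb (by positivity) (by positivity) hsum
  have hFq : F q = 0 := by simp [q, Convex.combo_affine_apply hsum, hFa, hFb]
  have hσq : (s + t) • q = s • a + t • b := by
    simp only [q, smul_add, smul_smul, mul_div_cancel₀ _ hσ.ne']
  have hpq : p = AffineMap.lineMap o q (s + t) := by
    rw [AffineMap.lineMap_apply_module]
    linear_combination (norm := module) hpo - hσq
  rcases le_or_gt (s + t) 1 with h1 | h1
  · rw [hpq]; exact hD.lineMap_mem ho hq ⟨hσ.le, h1⟩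
  · refine hD' p hp ?_
    rw [hpq, AffineMap.apply_lineMap, hFq, AffineMap.lineMap_apply_module]
    simp only [smul_eq_mul, mul_zero, add_zero]
    nlinarith

theorem sub_mem_cone_of_chord (hD : Convex ℝ D) (ho : o ∈ D) (hFo : F o < 0)
    (hchord : ∀ q ∈ D, F q = 0 → q ∈ segment ℝ a b) (hp : p ∈ D) (hFp : 0 < F p) :
    ∃ s t : ℝ, 0 ≤ s ∧ 0 ≤ t ∧ p - o = s • (a - o) + t • (b - o) := by
  set τ := F o / (F o - F p)
  have hτ₀ : 0 < τ := div_pos_of_neg_of_neg hFo (by linarith)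
  have hτ₁ : τ ≤ 1 := (div_le_one_of_neg (by linarith)).2 (by linarith)
  have hFq : F (AffineMap.lineMap o p τ) = 0 := by
    rw [AffineMap.apply_lineMap, AffineMap.lineMap_apply_module, smul_eq_mul, smul_eq_mul]
    have : F o - F p ≠ 0 := by linarith
    simp only [τ]
    field_simp
    ring
  obtain ⟨s, t, hs, ht, hst, hq⟩ := hchord _ (hD.lineMap_mem ho hp ⟨hτ₀.le, hτ₁⟩) hFq
  refine ⟨s / τ, t / τ, by positivity, by positivity, ?_⟩
  rw [AffineMap.lineMap_apply_module] at hq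
  rw [div_eq_inv_mul, div_eq_inv_mul, mul_smul, mul_smul, ← smul_add, eq_inv_smul_iff₀ hτ₀.ne']
  linear_combination (norm := module) -hq + hst • o

end ConeOverChord

namespace Complex

open Set

theorem arg_div_eq_sub {x y : ℂ} (hx : x ≠ 0) (hy : y ≠ 0)
    (h : arg x - arg y ∈ Ioc (-π) π) :
    arg (x / y) = arg x - arg y := by
  rw [← arg_coe_angle_toReal_eq_arg, arg_div_coe_angle hx hy, ← Real.Angle.coe_sub,
    Real.Angle.toReal_coe_eq_self_iff_mem_Ioc.2 h]

theorem im_div (z w : ℂ) : (z / w).im = (z * conj w).im / normSq w := by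
  simp only [div_im, mul_im, conj_re, conj_im]
  ring

theorem exists_nonneg_add_mul_iff {C w : ℂ} (hC : 0 < C.im) :
    (∃ s t : ℝ, 0 ≤ s ∧ 0 ≤ t ∧ w = s + t * C) ↔
      0 ≤ w.im ∧ 0 ≤ (C * conj w).im := by
  constructor
  · rintro ⟨s, t, hs, ht, rfl⟩
    simp only [add_im, add_re, ofReal_im, ofReal_re, mul_im, mul_re, conj_re, conj_im]
    constructor <;> nlinarith
  · rintro ⟨hw, hCw⟩
    simp only [mul_im, conj_re, conj_im] at hCw
    -- Cramer's rule
    refine ⟨(C * conj w).im / C.im, w.im / C.im, ?_, by positivity, ?_⟩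
    · simp only [mul_im, conj_re, conj_im]
      positivity
    · apply Complex.ext <;>
        simp only [add_re, add_im, mul_re, mul_im, ofReal_re, ofReal_im, conj_re, conj_im] <;>
        field_simp <;> ring

theorem arg_le_arg_iff_im_mul_conj_nonneg {C w : ℂ} (hC : 0 < C.im) (hw : 0 ≤ w.im)
    (hw₀ : w ≠ 0) :
    arg w ≤ arg C ↔ 0 ≤ (C * conj w).im := by
  have hC₀ : C ≠ 0 := fun h => by simp [h] at hC
  have hCarg : 0 < arg C :=
    (arg_nonneg_iff.2 hC.le).lt_of_ne fun h => hC.ne' (arg_eq_zero_iff.1 h.symm).2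
  have hCπ : arg C < π := arg_lt_pi_iff.2 (Or.inr hC.ne')
  have hwarg : 0 ≤ arg w := arg_nonneg_iff.2 hw
  have hdiv : arg (C / w) = arg C - arg w :=
    arg_div_eq_sub hC₀ hw₀ ⟨by linarith [arg_le_pi w], by linarith⟩
  rw [← sub_nonneg, ← hdiv, arg_nonneg_iff, im_div, le_div_iff₀ (normSq_pos.2 hw₀),
    zero_mul]

theorem exists_nonneg_add_mul_iff_arg_mem_Icc {C w : ℂ} (hC : 0 < C.im) (hw : w ≠ 0) :
    (∃ s t : ℝ, 0 ≤ s ∧ 0 ≤ t ∧ w = s + t * C) ↔ arg w ∈ Icc 0 (arg C) := by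
  rw [exists_nonneg_add_mul_iff hC, mem_Icc, arg_nonneg_iff]
  exact and_congr_right fun hw' => (arg_le_arg_iff_im_mul_conj_nonneg hC hw' hw).symm

theorem exists_nonneg_smul_add_iff_arg_div {A B z : ℂ} (hA : A ≠ 0) (hAB : 0 < (B / A).im)
    (hz : z ≠ 0) :
    (∃ s t : ℝ, 0 ≤ s ∧ 0 ≤ t ∧ z = s • A + t • B) ↔
      arg (z / A) ∈ Icc 0 (arg (B / A)) := by
  rw [← exists_nonneg_add_mul_iff_arg_mem_Icc hAB (div_ne_zero hz hA)]
  refine exists₂_congr fun s t => and_congr_right fun _ => and_congr_right fun _ => ?_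
  rw [div_eq_iff hA, real_smul, real_smul, add_mul, mul_assoc, div_mul_cancel₀ _ hA]

theorem norm_mul_exp_arg_add_arg_div {A : ℂ} (hA : A ≠ 0) (z : ℂ) :
    ‖z‖ * exp (↑(arg A + arg (z / A)) * I) = z := by
  have hnorm : ‖z‖ = ‖A‖ * ‖z / A‖ := by
    rw [norm_div, mul_div_cancel₀ _ (norm_ne_zero_iff.2 hA)]
  calc _ = (‖A‖ * exp (arg A * I)) * (‖z / A‖ * exp (arg (z / A) * I)) := by
          rw [hnorm]; push_cast; rw [add_mul, exp_add]; ring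
    _ = z := by rw [norm_mul_exp_arg_mul_I, norm_mul_exp_arg_mul_I, mul_div_cancel₀ _ hA]

variable {c₁ c₂ q : ℂ} {r : ℝ}

noncomputable def bisectorLine (c₁ c₂ : ℂ) : ℝ →ᵃ[ℝ] ℂ :=
  AffineMap.lineMap ((c₁ + c₂) / 2) ((c₁ + c₂) / 2 + I * (c₂ - c₁))

theorem bisectorLine_apply (t : ℝ) :
    bisectorLine c₁ c₂ t = (c₁ + c₂) / 2 + t * (I * (c₂ - c₁)) := by
  rw [bisectorLine, AffineMap.lineMap_apply, vsub_eq_sub, add_sub_cancel_left, vadd_eq_add,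
    real_smul, add_comm]

theorem sqDistDiff_eq_re (c₁ c₂ p : ℂ) :
    sqDistDiff c₁ c₂ p = 2 * ((p - (c₁ + c₂) / 2) * conj (c₂ - c₁)).re := by
  simp only [sqDistDiff_apply, Complex.sq_norm, normSq_apply, mul_re, sub_re, sub_im, add_re,
    add_im, conj_re, conj_im, div_ofNat_re, div_ofNat_im]
  ring

theorem sqDistDiff_bisectorLine (t : ℝ) :
    sqDistDiff c₁ c₂ (bisectorLine c₁ c₂ t) = 0 := by
  simp only [sqDistDiff_eq_re, bisectorLine_apply, mul_re, sub_re, sub_im, add_re, add_im,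
    conj_re, conj_im, ofReal_re, ofReal_im, I_re, I_im, mul_im, div_ofNat_re, div_ofNat_im]
  ring

theorem exists_bisectorLine_eq (hc : c₁ ≠ c₂) (hq : sqDistDiff c₁ c₂ q = 0) :
    ∃ t, bisectorLine c₁ c₂ t = q := by
  have hv : I * (c₂ - c₁) ≠ 0 := mul_ne_zero I_ne_zero (sub_ne_zero.2 hc.symm)
  refine ⟨((q - (c₁ + c₂) / 2) / (I * (c₂ - c₁))).re, ?_⟩
  rw [bisectorLine_apply, ← eq_sub_iff_add_eq', ← eq_div_iff hv]
  refine Complex.ext rfl ?_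
  rw [sqDistDiff_eq_re] at hq
  simp only [ofReal_im, div_im, mul_re, mul_im, sub_re, sub_im, add_re, add_im, conj_re, conj_im,
    I_re, I_im, div_ofNat_re] at hq ⊢
  rw [← sub_div, eq_comm, div_eq_zero_iff]
  left
  linarith

theorem norm_bisectorLine_sub_sq (t : ℝ) :
    ‖bisectorLine c₁ c₂ t - c₂‖ ^ 2 = dist c₁ c₂ ^ 2 * (t ^ 2 + 1 / 4) := by
  simp only [dist_eq_norm, Complex.sq_norm, normSq_apply, bisectorLine_apply, mul_re, sub_re,
    sub_im, add_re, add_im, ofReal_re, ofReal_im, I_re, I_im, mul_im, div_ofNat_re, div_ofNat_im]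
  ring

theorem exists_bisectorLine_mem_closedBall_iff (hc : c₁ ≠ c₂) (hd : dist c₁ c₂ < 2 * r) :
    ∃ T > 0, ∀ t, bisectorLine c₁ c₂ t ∈ closedBall c₂ r ↔ t ∈ Icc (-T) T := by
  have hd₀ : 0 < dist c₁ c₂ := dist_pos.2 hc
  have hr : 0 < r := by linarith
  have hT : 0 < (r / dist c₁ c₂) ^ 2 - 1 / 4 := by
    rw [div_pow, sub_pos, lt_div_iff₀ (by positivity)]
    nlinarith
  refine ⟨√((r / dist c₁ c₂) ^ 2 - 1 / 4), Real.sqrt_pos.2 hT, fun t => ?_⟩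
  rw [mem_closedBall, dist_eq_norm, ← sq_le_sq₀ (norm_nonneg _) hr.le, norm_bisectorLine_sub_sq,
    mem_Icc, ← Real.sq_le hT.le, div_pow, le_sub_iff_add_le, le_div_iff₀ (by positivity)]
  ring_nf

theorem exists_closedBall_inter_sqDistDiff_eq_zero_eq_segment (hc : c₁ ≠ c₂)
    (hd : dist c₁ c₂ < 2 * r) :
    ∃ T > 0, closedBall c₂ r ∩ {q | sqDistDiff c₁ c₂ q = 0} =
      segment ℝ (bisectorLine c₁ c₂ (-T)) (bisectorLine c₁ c₂ T) := by
  obtain ⟨T, hT, hℓ⟩ := exists_bisectorLine_mem_closedBall_iff hc hd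
  refine ⟨T, hT, ?_⟩
  rw [← image_segment, segment_eq_Icc (by linarith)]
  ext q
  constructor
  · rintro ⟨hq, hFq⟩
    obtain ⟨t, rfl⟩ := exists_bisectorLine_eq hc hFq
    exact mem_image_of_mem _ ((hℓ t).1 hq)
  · rintro ⟨t, ht, rfl⟩
    exact ⟨(hℓ t).2 ht, sqDistDiff_bisectorLine t⟩

theorem im_bisectorLine_sub_mul_conj (o : ℂ) (t s : ℝ) :
    ((bisectorLine c₁ c₂ t - o) * conj (bisectorLine c₁ c₂ s - o)).im =
      (s - t) / 2 * sqDistDiff c₁ c₂ o := by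
  simp only [sqDistDiff_eq_re, bisectorLine_apply, mul_re, sub_re, sub_im, add_re, add_im,
    conj_re, conj_im, ofReal_re, ofReal_im, I_re, I_im, mul_im, div_ofNat_re, div_ofNat_im,
    map_sub, map_add, map_mul, conj_ofReal]
  ring

theorem im_sub_div_neg_I_mul (c₁ c₂ o p : ℂ) :
    ((p - o) / -(I * (c₂ - c₁))).im =
      (sqDistDiff c₁ c₂ p - sqDistDiff c₁ c₂ o) / (2 * normSq (c₂ - c₁)) := by
  simp only [sqDistDiff_eq_re, div_im, mul_re, sub_re, sub_im, neg_re, neg_im, mul_im, I_re, I_im,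
    conj_re, conj_im, normSq_neg, normSq_mul, normSq_I, add_re, add_im, div_ofNat_re]
  ring

end Complex

section AngularPartition

open Complex Set

def AngularlySeparated (o : ℂ) (S₁ S₂ : Set ℂ) : Prop :=
  ∃ θ₁ θ₂ : ℝ, θ₁ ≤ θ₂ ∧ θ₂ ≤ θ₁ + 2 * π ∧
    (∀ p ∈ S₁, p ≠ o →
      ∃ θ ∈ Icc θ₁ θ₂, ∃ ρ : ℝ, 0 < ρ ∧ p - o = ρ * exp (θ * I)) ∧
    (∀ p ∈ S₂, p ≠ o →
      ∃ θ ∈ Icc θ₂ (θ₁ + 2 * π), ∃ ρ : ℝ, 0 < ρ ∧ p - o = ρ * exp (θ * I))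

theorem AngularlySeparated.symm {o : ℂ} {S₁ S₂ : Set ℂ}
    (h : AngularlySeparated o S₁ S₂) : AngularlySeparated o S₂ S₁ := by
  obtain ⟨θ₁, θ₂, h₁₂, h₂₁, hS₁, hS₂⟩ := h
  refine ⟨θ₂, θ₁ + 2 * π, h₂₁, by linarith, hS₂, fun p hp hpo => ?_⟩
  obtain ⟨θ, ⟨hθ₁, hθ₂⟩, ρ, hρ, hpθ⟩ := hS₁ p hp hpo
  refine ⟨θ + 2 * π, ⟨by linarith, by linarith⟩, ρ, hρ, ?_⟩
  rw [hpθ, ofReal_add, ofReal_mul, ofReal_ofNat]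
  exact congrArg _ (exp_mul_I_periodic _).symm

def HasAngularPartition (S : Finset ℂ) (D₁ D₂ : Set ℂ) (o : ℂ) : Prop :=
  ∃ S₁ S₂ : Finset ℂ, S₁ ∪ S₂ = S ∧ Disjoint S₁ S₂ ∧
    (S₁ : Set ℂ) ⊆ D₁ ∧ (S₂ : Set ℂ) ⊆ D₂ ∧ AngularlySeparated o S₁ S₂

theorem HasAngularPartition.symm {S : Finset ℂ} {D₁ D₂ : Set ℂ} {o : ℂ}
    (h : HasAngularPartition S D₁ D₂ o) : HasAngularPartition S D₂ D₁ o := by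
  obtain ⟨S₁, S₂, hS, hdisj, h₁, h₂, hsep⟩ := h
  exact ⟨S₂, S₁, Finset.union_comm S₁ S₂ ▸ hS, hdisj.symm, h₂, h₁, hsep.symm⟩

theorem hasAngularPartition_of_arg_div {S : Finset ℂ} {D₁ D₂ : Set ℂ} {o A : ℂ} {δ : ℝ}
    (hA : A ≠ 0) (hδ : δ ∈ Icc 0 π) (ho : o ∈ D₁)
    (h₂ : ∀ p ∈ S, p ≠ o → arg ((p - o) / A) ∈ Icc 0 δ → p ∈ D₂)
    (h₁ : ∀ p ∈ S, p ≠ o → arg ((p - o) / A) ∉ Icc 0 δ → p ∈ D₁) :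
    HasAngularPartition S D₁ D₂ o := by
  set P : ℂ → Prop := fun p => p ≠ o ∧ arg ((p - o) / A) ∈ Icc 0 δ
  have hpolar {p : ℂ} (hp : p ≠ o) :
      0 < ‖p - o‖ ∧ p - o = ‖p - o‖ * exp (↑(arg A + arg ((p - o) / A)) * I) :=
    ⟨norm_pos_iff.2 (sub_ne_zero.2 hp), (norm_mul_exp_arg_add_arg_div hA _).symm⟩
  refine ⟨S.filter (¬ P ·), S.filter P,
    by rw [Finset.union_comm, Finset.filter_union_filter_not_eq],
    (Finset.disjoint_filter_filter_not ..).symm, fun p hp => ?_, fun p hp => ?_,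
    arg A + δ - 2 * π, arg A, by linarith [hδ.2, pi_pos], by linarith [hδ.1], ?_, ?_⟩
  · obtain ⟨hpS, hpP⟩ := Finset.mem_filter.1 hp
    by_cases hpo : p = o
    · exact hpo ▸ ho
    · exact h₁ p hpS hpo fun h => hpP ⟨hpo, h⟩
  · obtain ⟨hpS, hpo, hpδ⟩ := Finset.mem_filter.1 hp
    exact h₂ p hpS hpo hpδ
  · intro p hp hpo
    have hβ : arg ((p - o) / A) ∉ Icc 0 δ := fun h => (Finset.mem_filter.1 hp).2 ⟨hpo, h⟩
    rw [mem_Icc, not_and_or, not_le, not_le] at hβ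
    have := neg_pi_lt_arg ((p - o) / A)
    have := arg_le_pi ((p - o) / A)
    obtain ⟨hρ, hpρ⟩ := hpolar hpo
    rcases hβ with hβ | hβ
    · exact ⟨arg A + arg ((p - o) / A), ⟨by linarith [hδ.2], by linarith⟩, _, hρ, hpρ⟩
    · refine ⟨arg A + arg ((p - o) / A) - 2 * π, ⟨by linarith, by linarith⟩, _, hρ, ?_⟩
      rw [ofReal_sub, ofReal_mul, ofReal_ofNat]
      exact hpρ.trans (congrArg _ (exp_mul_I_periodic.sub_eq _).symm)
  · intro p hp hpo
    obtain ⟨-, -, hβ₀, hβδ⟩ := Finset.mem_filter.1 hp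
    obtain ⟨hρ, hpρ⟩ := hpolar hpo
    exact ⟨arg A + arg ((p - o) / A), ⟨by linarith, by linarith⟩, _, hρ, hpρ⟩

theorem hasAngularPartition_of_subset {S : Finset ℂ} {D : Set ℂ} {o : ℂ}
    (hS : (S : Set ℂ) ⊆ D) (ho : o ∈ D) : HasAngularPartition S D D o :=
  hasAngularPartition_of_arg_div one_ne_zero ⟨le_rfl, pi_pos.le⟩ ho
    (fun _ hp _ _ => hS hp) (fun _ hp _ _ => hS hp)

theorem hasAngularPartition_of_dist_eq {S : Finset ℂ} {r : ℝ} {c₁ c₂ o : ℂ}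
    (hcover : (S : Set ℂ) ⊆ closedBall c₁ r ∪ closedBall c₂ r) (ho : o ∈ closedBall c₁ r)
    (hc : c₁ ≠ c₂) (h : dist o c₁ = dist o c₂) :
    HasAngularPartition S (closedBall c₁ r) (closedBall c₂ r) o := by
  have hFo : sqDistDiff c₁ c₂ o = 0 :=
    le_antisymm (sqDistDiff_nonpos_iff.2 h.le) (sqDistDiff_nonneg_iff.2 h.ge)
  have hv : c₂ - c₁ ≠ 0 := sub_ne_zero.2 hc.symm
  have hside (p : ℂ) :
      arg ((p - o) / -(I * (c₂ - c₁))) ∈ Icc 0 π ↔ 0 ≤ sqDistDiff c₁ c₂ p := by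
    rw [mem_Icc, and_iff_left (arg_le_pi _), arg_nonneg_iff, im_sub_div_neg_I_mul, hFo, sub_zero,
      le_div_iff₀ (by positivity [normSq_pos.2 hv]), zero_mul]
  refine hasAngularPartition_of_arg_div (neg_ne_zero.2 (mul_ne_zero I_ne_zero hv))
    ⟨pi_pos.le, le_rfl⟩ ho (fun p hpS _ hp => ?_) (fun p hpS _ hp => ?_)
  · rcases hcover hpS with hp₁ | hp₂
    · exact (sqDistDiff_nonneg_iff.1 ((hside p).1 hp)).trans hp₁
    · exact hp₂
  · rcases hcover hpS with hp₁ | hp₂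
    · exact hp₁
    · exact (le_of_not_ge fun h => hp ((hside p).2 (sqDistDiff_nonneg_iff.2 h))).trans hp₂

theorem hasAngularPartition_of_dist_lt {S : Finset ℂ} {r : ℝ} {c₁ c₂ o : ℂ}
    (hcover : (S : Set ℂ) ⊆ closedBall c₁ r ∪ closedBall c₂ r)
    (ho : o ∈ closedBall c₁ r ∩ closedBall c₂ r) (h : dist o c₁ < dist o c₂) :
    HasAngularPartition S (closedBall c₁ r) (closedBall c₂ r) o := by
  have hFo : sqDistDiff c₁ c₂ o < 0 :=
    not_le.1 fun hF => (sqDistDiff_nonneg_iff.1 hF).not_gt h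
  have hc : c₁ ≠ c₂ := by rintro rfl; exact h.ne rfl
  have hd : dist c₁ c₂ < 2 * r := by
    linarith [dist_triangle_left c₁ c₂ o, mem_closedBall.1 ho.2]
  obtain ⟨T, hT, hchord⟩ := exists_closedBall_inter_sqDistDiff_eq_zero_eq_segment hc hd
  set a := bisectorLine c₁ c₂ (-T)
  set b := bisectorLine c₁ c₂ T
  have ha : a ∈ closedBall c₂ r ∩ {q | sqDistDiff c₁ c₂ q = 0} :=
    hchord ▸ left_mem_segment ℝ a b
  have hb : b ∈ closedBall c₂ r ∩ {q | sqDistDiff c₁ c₂ q = 0} :=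
    hchord ▸ right_mem_segment ℝ a b
  have hA : a - o ≠ 0 := sub_ne_zero.2 fun h => hFo.ne (h ▸ ha.2)
  have hAB : 0 < ((b - o) / (a - o)).im := by
    rw [im_div, im_bisectorLine_sub_mul_conj]
    exact div_pos (by nlinarith) (normSq_pos.2 hA)
  have hcone {p : ℂ} (hp : p ≠ o) :=
    exists_nonneg_smul_add_iff_arg_div hA hAB (sub_ne_zero.2 hp)
  refine hasAngularPartition_of_arg_div hA ⟨arg_nonneg_iff.2 hAB.le, arg_le_pi _⟩ ho.1
    (fun p hpS hpo hp => ?_) (fun p hpS hpo hp => ?_)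
  · rcases hcover hpS with hp₁ | hp₂
    · exact mem_of_sub_mem_cone_of_chord (convex_closedBall c₂ r) ho.2 hFo.le ha.1 hb.1 ha.2
        hb.2 (fun x hx hFx => (sqDistDiff_nonneg_iff.1 hFx).trans hx) hp₁ ((hcone hpo).2 hp)
    · exact hp₂
  · by_contra hp₁
    have hp₂ := (hcover hpS).resolve_left hp₁
    have hFp : 0 < sqDistDiff c₁ c₂ p :=
      not_le.1 fun hF => hp₁ ((sqDistDiff_nonpos_iff.1 hF).trans hp₂)
    exact hp ((hcone hpo).1 (sub_mem_cone_of_chord (convex_closedBall c₂ r) ho.2 hFo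
      (fun q hq hFq => hchord ▸ ⟨hq, hFq⟩) hp₂ hFp))

end AngularPartition

theorem two_rays_separate_cover_general (S : Finset ℂ) (r : ℝ) (c₁ c₂ o : ℂ)
    (hcover : (S : Set ℂ) ⊆ closedBall c₁ r ∪ closedBall c₂ r)
    (ho : o ∈ closedBall c₁ r ∩ closedBall c₂ r) :
    ∃ S₁ S₂ : Finset ℂ, S₁ ∪ S₂ = S ∧ Disjoint S₁ S₂ ∧
      (S₁ : Set ℂ) ⊆ closedBall c₁ r ∧ (S₂ : Set ℂ) ⊆ closedBall c₂ r ∧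
      ∃ θ₁ θ₂ : ℝ, θ₁ ≤ θ₂ ∧ θ₂ ≤ θ₁ + 2 * π ∧
        (∀ p ∈ S₁, p ≠ o →
          ∃ θ ∈ Set.Icc θ₁ θ₂, ∃ ρ : ℝ, 0 < ρ ∧ p - o = ρ * Complex.exp (θ * Complex.I)) ∧
        (∀ p ∈ S₂, p ≠ o →
          ∃ θ ∈ Set.Icc θ₂ (θ₁ + 2 * π), ∃ ρ : ℝ, 0 < ρ ∧
            p - o = ρ * Complex.exp (θ * Complex.I)) := by
  rcases lt_trichotomy (dist o c₁) (dist o c₂) with h | h | h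
  · exact hasAngularPartition_of_dist_lt hcover ho h
  · rcases eq_or_ne c₁ c₂ with rfl | hc
    · exact hasAngularPartition_of_subset (by rwa [Set.union_self] at hcover) ho.1
    · exact hasAngularPartition_of_dist_eq hcover ho.1 hc h
  · rw [Set.union_comm] at hcover
    exact (hasAngularPartition_of_dist_lt hcover ⟨ho.2, ho.1⟩ h).symm

/-- If a finite planar point set `S` is covered by two congruent closed disks
`D₁ = D(c₁,r)`, `D₂ = D(c₂,r)` whose intersection contains a point `o`, then `S` can be
partitioned into `S₁ ⊆ D₁` and `S₂ ⊆ D₂` that are angularly separated around `o` by two rays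
`μ₁, μ₂` emanating from `o` (at angles `θ₁` and `θ₂`): every point of `S₁ \ {o}` lies in the
closed wedge of directions with angles in `[θ₁, θ₂]` and every point of `S₂ \ {o}` lies in the
complementary closed wedge `[θ₂, θ₁ + 2π]`. (The plane is modelled by `ℂ`.) -/
theorem two_rays_separate_cover (S : Finset ℂ) (r : ℝ) (hr : 0 < r) (c₁ c₂ o : ℂ)
    (hcover : (S : Set ℂ) ⊆ closedBall c₁ r ∪ closedBall c₂ r)
    (ho : o ∈ closedBall c₁ r ∩ closedBall c₂ r) :
    ∃ S₁ S₂ : Finset ℂ, S₁ ∪ S₂ = S ∧ Disjoint S₁ S₂ ∧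
      (S₁ : Set ℂ) ⊆ closedBall c₁ r ∧ (S₂ : Set ℂ) ⊆ closedBall c₂ r ∧
      ∃ θ₁ θ₂ : ℝ, θ₁ ≤ θ₂ ∧ θ₂ ≤ θ₁ + 2 * π ∧
        (∀ p ∈ S₁, p ≠ o →
          ∃ θ ∈ Set.Icc θ₁ θ₂, ∃ ρ : ℝ, 0 < ρ ∧ p - o = ρ * Complex.exp (θ * Complex.I)) ∧
        (∀ p ∈ S₂, p ≠ o →
          ∃ θ ∈ Set.Icc θ₂ (θ₁ + 2 * π), ∃ ρ : ℝ, 0 < ρ ∧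
            p - o = ρ * Complex.exp (θ * Complex.I)) :=
  two_rays_separate_cover_general S r c₁ c₂ o hcover ho
end

section
/- Let R = (r_{ij}) be defined by r_{ij} = max(A[i,j], B[i,j]) where A[i,j] is non-increasing in i and non-decreasing in j, and B[i,j] is non-decreasing in i and non-increasing in j. Let j(i) be a minimizing index of j ↦ r_{ij}. Then the matrix R is monotone: one can choose the minimizers so that i_1 > i_2 implies j(i_1) ≥ j(i_2). -/
/-!
In each row `r i · = max (A i ·) (B i ·)` is the maximum of a non-decreasing and a non-increasing
sequence, so it is minimized at the first column `j` with `B i j ≤ A i (j + 1)` (or at `n`).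
Passing to a later row increases `B` and decreases `A`, so this crossing condition only becomes harder
to meet and the crossing column moves to the right.
-/

section Crossing

variable {α : Type*} [LinearOrder α] (n : ℕ) (f g : ℕ → α)

def crossingIndex : ℕ := Nat.find (⟨n, .inl le_rfl⟩ : ∃ j, n ≤ j ∨ g j ≤ f (j + 1))

theorem crossingIndex_spec :
    n ≤ crossingIndex n f g ∨ g (crossingIndex n f g) ≤ f (crossingIndex n f g + 1) :=
  Nat.find_spec (⟨n, .inl le_rfl⟩ : ∃ j, n ≤ j ∨ g j ≤ f (j + 1))

theorem crossingIndex_le : crossingIndex n f g ≤ n :=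
  Nat.find_min' _ (.inl le_rfl)

variable {n f g}

theorem lt_of_lt_crossingIndex {k : ℕ} (hk : k < crossingIndex n f g) : f (k + 1) < g k := by
  have := Nat.find_min (⟨n, .inl le_rfl⟩ : ∃ j, n ≤ j ∨ g j ≤ f (j + 1)) hk
  exact not_le.mp (not_or.mp this).2

theorem isMinOn_max_crossingIndex (hf : MonotoneOn f (Set.Iic n)) (hg : AntitoneOn g (Set.Iic n)) :
    IsMinOn (fun j ↦ max (f j) (g j)) (Set.Iic n) (crossingIndex n f g) := by
  intro k (hk : k ≤ n)
  set c := crossingIndex n f g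
  have hc : c ≤ n := crossingIndex_le n f g
  rcases lt_trichotomy c k with hck | rfl | hkc
  · have hgc : g c ≤ f (c + 1) := (crossingIndex_spec n f g).resolve_left (by omega)
    have hfc : f (c + 1) ≤ f k := hf (show c + 1 ≤ n by omega) hk hck
    exact max_le (le_max_of_le_left (hf hc hk hck.le)) (le_max_of_le_left (hgc.trans hfc))
  · exact le_rfl
  · have hfc : f c < g (c - 1) := by
      simpa [Nat.sub_add_cancel (by omega : 1 ≤ c)] using
        lt_of_lt_crossingIndex (by omega : c - 1 < c)
    have hgc : g (c - 1) ≤ g k := hg hk (show c - 1 ≤ n by omega) (by omega)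
    exact max_le (le_max_of_le_right (hfc.le.trans hgc)) (le_max_of_le_right (hg hk hc hkc.le))

theorem crossingIndex_mono {f' g' : ℕ → α} (hf : ∀ j ≤ n, f' j ≤ f j)
    (hg : ∀ j ≤ n, g j ≤ g' j) :
    crossingIndex n f g ≤ crossingIndex n f' g' := by
  refine Nat.find_mono fun j hj ↦ ?_
  rcases le_or_gt n j with hnj | hjn
  · exact .inl hnj
  · exact .inr ((hg j hjn.le).trans ((hj.resolve_left hjn.not_ge).trans (hf (j + 1) hjn)))

end Crossing

/-- Let `r i j = max (A i j) (B i j)` where `A` is non-increasing in `i` and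
non-decreasing in `j`, while `B` is non-decreasing in `i` and non-increasing in `j`, on the
index range `0..n`. Then the matrix `(r i j)` is monotone: one can choose a minimizer
`J i ∈ argmin_j r i j` for each row `i` so that `i₂ < i₁` implies `J i₂ ≤ J i₁`. -/
theorem monotone_matrix_minimizers (n : ℕ) (A B : ℕ → ℕ → ℝ)
    (hAi : ∀ i i' j, i ≤ i' → i' ≤ n → j ≤ n → A i' j ≤ A i j)
    (hAj : ∀ i j j', j ≤ j' → i ≤ n → j' ≤ n → A i j ≤ A i j')
    (hBi : ∀ i i' j, i ≤ i' → i' ≤ n → j ≤ n → B i j ≤ B i' j)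
    (hBj : ∀ i j j', j ≤ j' → i ≤ n → j' ≤ n → B i j' ≤ B i j) :
    ∃ J : ℕ → ℕ,
      (∀ i, i ≤ n → J i ≤ n ∧
        ∀ j, j ≤ n → max (A i (J i)) (B i (J i)) ≤ max (A i j) (B i j)) ∧
      (∀ i₁ i₂, i₂ < i₁ → i₁ ≤ n → J i₂ ≤ J i₁) := by
  refine ⟨fun i ↦ crossingIndex n (A i) (B i), fun i hi ↦ ⟨crossingIndex_le n _ _, ?_⟩, ?_⟩
  · have hA : MonotoneOn (A i) (Set.Iic n) := fun j _ j' hj' hjj' ↦ hAj i j j' hjj' hi hj'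
    have hB : AntitoneOn (B i) (Set.Iic n) := fun j _ j' hj' hjj' ↦ hBj i j j' hjj' hi hj'
    exact fun j hj ↦ isMinOn_max_crossingIndex hA hB hj
  · intro i₁ i₂ hi hi₁
    exact crossingIndex_mono (fun j hj ↦ hAi i₂ i₁ j hi.le hi₁ hj)
      (fun j hj ↦ hBi i₂ i₁ j hi.le hi₁ hj)
end

section
/- Let S be a finite set of points in the plane in convex position. Then there exists an optimal solution (D_1, D_2) to the 2-center problem on S (two congruent disks of minimum radius covering S) such that the points of S covered by D_1 form a set of consecutive vertices along the boundary of the convex hull of S. -/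
/-!
For centres `c₁, c₂`, the points at least as close to `c₁` as to `c₂` form a closed half-plane
`H`, and its complement is convex as well. Enumerate `S` counterclockwise by the angle around its
lexicographically smallest point; any four points taken in this order span a convex
quadrilateral, whose diagonals meet. If the points of `S` lying in `H` were not a cyclic interval
of the enumeration, four of them would alternate in and out of `H`, and the crossing point of the
diagonals would lie both in `H` and in its complement. So it suffices to take an optimal pair of
centres, which exists by compactness, and to assign each point to its nearer centre.
-/

open Metric

/-- The planar cross product of two vectors (the plane modelled by `ℂ`). -/
def cross (z w : ℂ) : ℝ := z.re * w.im - z.im * w.re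

open Complex

lemma cross_swap (v w : ℂ) : -cross v w = cross w v := by
  simp only [cross]; ring

lemma cross_sub_rotate (a b c : ℂ) : cross (b - a) (c - a) = cross (c - b) (a - b) := by
  simp only [cross, sub_re, sub_im]; ring

lemma cross_eq_norm_mul_sin_arg_sub (v w : ℂ) :
    cross v w = ‖v‖ * ‖w‖ * Real.sin (arg w - arg v) := by
  rw [Real.sin_sub, cross, ← norm_mul_cos_arg v, ← norm_mul_sin_arg v, ← norm_mul_cos_arg w,
    ← norm_mul_sin_arg w]
  ring

lemma cross_pos_of_arg_lt {v w : ℂ} (hv : v ≠ 0) (hw : w ≠ 0) (h : arg v < arg w)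
    (h' : arg w < arg v + Real.pi) : 0 < cross v w := by
  have := Real.sin_pos_of_pos_of_lt_pi (sub_pos.2 h) (by linarith)
  rw [cross_eq_norm_mul_sin_arg_sub]
  positivity

lemma mem_convexHull_triangle_of_cross_nonneg {A B C P : ℂ} (hΔ : 0 < cross (B - A) (C - A))
    (hA : 0 ≤ cross (C - B) (P - B)) (hB : 0 ≤ cross (A - C) (P - C))
    (hC : 0 ≤ cross (B - A) (P - A)) : P ∈ convexHull ℝ {A, B, C} := by
  set w : Fin 3 → ℝ := ![cross (C - B) (P - B), cross (A - C) (P - C), cross (B - A) (P - A)]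
  have hw : ∑ i, w i = cross (B - A) (C - A) := by
    simp only [w, Fin.sum_univ_three, Matrix.cons_val, cross, sub_re, sub_im]; ring
  have hP : Finset.univ.centerMass w ![A, B, C] = P := by
    rw [Finset.centerMass, hw, inv_smul_eq_iff₀ hΔ.ne']
    apply Complex.ext <;> simp only [w, Fin.sum_univ_three, Matrix.cons_val_zero,
      Matrix.cons_val_one, Matrix.cons_val, add_re, add_im, real_smul, mul_re, mul_im, ofReal_re,
      ofReal_im, cross, sub_re, sub_im] <;> ring
  rw [← hP]
  refine Finset.centerMass_mem_convexHull _ (fun i _ => ?_) (hw ▸ hΔ) (fun i _ => ?_) <;>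
    fin_cases i <;> simp [w, *]

lemma segment_inter_segment_nonempty {A B C D : ℂ} (hABC : 0 < cross (B - A) (C - A))
    (hACD : 0 < cross (C - A) (D - A)) (hABD : 0 < cross (B - A) (D - A))
    (hBCD : 0 < cross (C - B) (D - B)) : (segment ℝ A C ∩ segment ℝ B D).Nonempty := by
  -- The diagonals cut each other in the ratios of the areas of the triangles they cut off.
  set area := cross (B - A) (C - A) + cross (C - A) (D - A)
  have harea : 0 < area := by positivity
  have hsum : cross (C - B) (D - B) + cross (B - A) (D - A) = area := by
    simp only [area, cross, sub_re, sub_im]; ring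
  have key : cross (C - B) (D - B) • A + cross (B - A) (D - A) • C =
      cross (C - A) (D - A) • B + cross (B - A) (C - A) • D := by
    apply Complex.ext <;> simp only [add_re, add_im, real_smul, mul_re, mul_im, ofReal_re,
      ofReal_im, cross, sub_re, sub_im] <;> ring
  refine ⟨(cross (C - B) (D - B) / area) • A + (cross (B - A) (D - A) / area) • C,
    ⟨_, _, by positivity, by positivity, by rw [← add_div, hsum, div_self harea.ne'], rfl⟩,
    ⟨cross (C - A) (D - A) / area, cross (B - A) (C - A) / area, by positivity, by positivity,
      by rw [← add_div, add_comm, div_self harea.ne'], ?_⟩⟩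
  simp only [div_eq_inv_mul, mul_smul, ← smul_add, key]

lemma ConvexIndependent.mem_of_mem_convexHull {𝕜 E : Type*} [Semiring 𝕜] [PartialOrder 𝕜]
    [AddCommGroup E] [Module 𝕜 E] {s t : Set E} (hs : ConvexIndependent 𝕜 ((↑) : s → E))
    (hts : t ⊆ s) {x : E} (hx : x ∈ s) (h : x ∈ convexHull 𝕜 t) : x ∈ t :=
  convexIndependent_set_iff_inter_convexHull_subset.1 hs t hts ⟨hx, h⟩

section ConvexPosition

variable {s : Set ℂ} (hs : ConvexIndependent ℝ ((↑) : s → ℂ))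
include hs

lemma ConvexIndependent.injOn_arg_sub {p : ℂ} (hp : p ∈ s) :
    Set.InjOn (fun z => arg (z - p)) (s \ {p}) := by
  have hbtw : ∀ {x y}, x ∈ s \ {p} → y ∈ s → Wbtw ℝ p x y → x = y := by
    intro x y hx hy h
    have := hs.mem_of_mem_convexHull (Set.insert_subset hp (Set.singleton_subset_iff.2 hy)) hx.1
      (by rw [convexHull_pair]; exact mem_segment_iff_wbtw.2 h)
    simpa [show x ≠ p from hx.2] using this
  intro x hx y hy hxy
  have hray : SameRay ℝ (x -ᵥ p) (y -ᵥ p) := Complex.sameRay_iff.2 (Or.inr (Or.inr hxy))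
  rcases wbtw_total_of_sameRay_vsub_left hray with h | h
  · exact hbtw hx hy.1 h
  · exact (hbtw hy hx.1 h).symm

lemma ConvexIndependent.cross_pos_of_fan {p a b c : ℂ} (hp : p ∈ s) (ha : a ∈ s) (hb : b ∈ s)
    (hc : c ∈ s) (hab : 0 < cross (a - p) (b - p)) (hbc : 0 < cross (b - p) (c - p))
    (hac : 0 < cross (a - p) (c - p)) : 0 < cross (b - a) (c - a) := by
  by_contra! h
  have hb' : b ∈ convexHull ℝ {p, a, c} := by
    refine mem_convexHull_triangle_of_cross_nonneg hac ?_ ?_ hab.le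
    · rw [← cross_swap]; linarith
    · rw [← cross_sub_rotate, ← cross_sub_rotate]; exact hbc.le
  rcases hs.mem_of_mem_convexHull (by simp [Set.insert_subset_iff, *]) hb hb' with rfl | rfl | rfl
  · simp [cross] at hab
  · simp [cross, mul_comm] at hab
  · simp [cross, mul_comm] at hbc

end ConvexPosition

lemma exists_mem_forall_arg_sub_mem_Ioc (S : Finset ℂ) (hS : S.Nonempty) :
    ∃ p ∈ S, ∀ z ∈ S, arg (z - p) ∈ Set.Ioc (-(Real.pi / 2)) (Real.pi / 2) := by
  obtain ⟨p, hp, hmin⟩ := S.exists_min_image (fun z => toLex (z.re, z.im)) hS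
  refine ⟨p, hp, fun z hz => ?_⟩
  rw [Set.mem_Ioc, neg_pi_div_two_lt_arg_iff, arg_le_pi_div_two_iff, sub_re, sub_im, sub_pos,
    sub_nonneg, sub_nonneg]
  rcases Prod.Lex.le_iff.1 (hmin z hz) with h | ⟨h, h'⟩
  · exact ⟨Or.inl h, Or.inl h.le⟩
  · exact ⟨Or.inr h', Or.inl h.le⟩

lemma exists_list_pairwise_lt_of_injOn {α β : Type*} [LinearOrder β] (s : Finset α) (f : α → β)
    (hf : Set.InjOn f s) : ∃ l : List α, l.Perm s.toList ∧ l.Pairwise (fun a b => f a < f b) := by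
  set l := s.toList.mergeSort (fun a b => f a ≤ f b)
  have hperm : l.Perm s.toList := List.mergeSort_perm _ _
  have hle : l.Pairwise (fun a b => f a ≤ f b) := by
    simpa using List.pairwise_mergeSort (le := fun a b => decide (f a ≤ f b))
      (fun a b c hab hbc => by simp only [decide_eq_true_eq] at *; exact hab.trans hbc)
      (fun a b => by simpa using le_total _ _) s.toList
  have hmem : ∀ a ∈ l, a ∈ s := fun a ha => Finset.mem_toList.1 (hperm.subset ha)
  refine ⟨l, hperm, (hle.and (hperm.nodup_iff.2 s.nodup_toList)).imp_of_mem ?_⟩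
  exact fun ha hb h => h.1.lt_of_ne fun he => h.2 (hf (hmem _ ha) (hmem _ hb) he)

lemma List.image_getD_Iio {α : Type*} (l : List α) (d : α) :
    (fun t => l.getD t d) '' Set.Iio l.length = {a | a ∈ l} := by
  ext a
  simp only [Set.mem_image, Set.mem_Iio, Set.mem_ofPred_eq, List.mem_iff_getElem]
  constructor
  · rintro ⟨t, ht, rfl⟩
    exact ⟨t, ht, (List.getD_eq_getElem _ _ ht).symm⟩
  · rintro ⟨t, ht, rfl⟩
    exact ⟨t, ht, List.getD_eq_getElem _ _ ht⟩

lemma List.Nodup.injOn_getD {α : Type*} {l : List α} (hl : l.Nodup) (d : α) :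
    Set.InjOn (fun t => l.getD t d) (Set.Iio l.length) := by
  intro i hi j hj h
  simp only [List.getD_eq_getElem _ _ hi, List.getD_eq_getElem _ _ hj] at h
  exact hl.getElem_inj_iff.1 h

def IsStrictlyConvexCCW (σ : ℕ → ℂ) (n : ℕ) : Prop :=
  ∀ ⦃i j k⦄, i < j → j < k → k < n → 0 < cross (σ j - σ i) (σ k - σ i)

lemma ConvexIndependent.isStrictlyConvexCCW_cons {s : Set ℂ}
    (hs : ConvexIndependent ℝ ((↑) : s → ℂ)) {p : ℂ} (hp : p ∈ s) {l : List ℂ}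
    (hl : ∀ z ∈ l, z ∈ s) (hfan : l.Pairwise fun a b => 0 < cross (a - p) (b - p)) :
    IsStrictlyConvexCCW (fun t => (p :: l).getD t 0) (l.length + 1) := by
  rw [List.pairwise_iff_getElem] at hfan
  intro i j k hij hjk hk
  obtain ⟨j, rfl⟩ : ∃ j', j = j' + 1 := ⟨j - 1, by omega⟩
  obtain ⟨k, rfl⟩ : ∃ k', k = k' + 1 := ⟨k - 1, by omega⟩
  simp only [List.getD_cons_succ, List.getD_eq_getElem _ _ (show j < l.length by omega),
    List.getD_eq_getElem _ _ (show k < l.length by omega)]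
  rcases i with _ | i
  · exact hfan j k _ _ (by omega)
  · rw [List.getD_cons_succ, List.getD_eq_getElem _ _ (show i < l.length by omega)]
    exact hs.cross_pos_of_fan hp (hl _ (List.getElem_mem _)) (hl _ (List.getElem_mem _))
      (hl _ (List.getElem_mem _)) (hfan i j _ _ (by omega)) (hfan j k _ _ (by omega))
      (hfan i k _ _ (by omega))

theorem exists_isStrictlyConvexCCW_enumeration (S : Finset ℂ)
    (hconv : ConvexIndependent ℝ ((↑) : ↥(S : Set ℂ) → ℂ)) :
    ∃ σ : ℕ → ℂ, (S : Set ℂ) = σ '' Set.Iio S.card ∧ Set.InjOn σ (Set.Iio S.card) ∧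
      IsStrictlyConvexCCW σ S.card := by
  rcases S.eq_empty_or_nonempty with rfl | hne
  · exact ⟨fun _ => 0, by simp, by simp, fun _ _ _ _ _ hk => absurd hk (by simp)⟩
  obtain ⟨p, hp, harg⟩ := exists_mem_forall_arg_sub_mem_Ioc S hne
  obtain ⟨l, hperm, hsorted⟩ := exists_list_pairwise_lt_of_injOn (S.erase p)
    (fun z => arg (z - p)) (by simpa [Finset.coe_erase] using hconv.injOn_arg_sub hp)
  have hmem : ∀ z, z ∈ l ↔ z ∈ S.erase p := fun z => hperm.mem_iff.trans Finset.mem_toList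
  have hlen : l.length + 1 = S.card := by
    rw [hperm.length_eq, Finset.length_toList, Finset.card_erase_add_one hp]
  have hnodup : (p :: l).Nodup := List.nodup_cons.2
    ⟨fun h => by simpa using (hmem p).1 h, hperm.nodup_iff.2 (S.erase p).nodup_toList⟩
  refine ⟨fun t => (p :: l).getD t 0, ?_, hlen ▸ hnodup.injOn_getD 0, hlen ▸ ?_⟩
  · rw [← hlen, ← List.length_cons, List.image_getD_Iio]
    ext z
    by_cases hz : z = p <;> simp [hmem, hz, hp]
  · refine hconv.isStrictlyConvexCCW_cons hp (fun z hz => (Finset.mem_erase.1 ((hmem z).1 hz)).2) ?_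
    refine hsorted.imp_of_mem fun ha hb h => cross_pos_of_arg_lt ?_ ?_ h ?_
    · exact sub_ne_zero.2 (Finset.ne_of_mem_erase ((hmem _).1 ha))
    · exact sub_ne_zero.2 (Finset.ne_of_mem_erase ((hmem _).1 hb))
    · linarith [(harg _ (Finset.mem_of_mem_erase ((hmem _).1 ha))).1,
        (harg _ (Finset.mem_of_mem_erase ((hmem _).1 hb))).2]

namespace IsStrictlyConvexCCW

variable {σ : ℕ → ℂ} {n : ℕ}

lemma cross_succ_nonneg (hσ : IsStrictlyConvexCCW σ n) {t u : ℕ} (ht : t < n) (hu : u < n) :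
    0 ≤ cross (σ ((t + 1) % n) - σ t) (σ u - σ t) := by
  rcases (show t + 1 ≤ n from ht).lt_or_eq with hlt | heq
  · rw [Nat.mod_eq_of_lt hlt]
    rcases lt_trichotomy u t with hut | rfl | htu
    · rw [← cross_sub_rotate]
      exact (hσ hut t.lt_succ_self hlt).le
    · simp [cross]
    · rcases (Nat.succ_le_of_lt htu).eq_or_lt with rfl | h
      · simp [cross, mul_comm]
      · exact (hσ t.lt_succ_self h hu).le
  · rw [heq, Nat.mod_self]
    rcases Nat.eq_zero_or_pos u with rfl | hu0
    · simp [cross, mul_comm]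
    · rcases (show u ≤ t by omega).eq_or_lt with rfl | hut
      · simp [cross]
      · rw [← cross_sub_rotate, ← cross_sub_rotate]
        exact (hσ hu0 hut ht).le

lemma mem_iff_mem_of_convex (hσ : IsStrictlyConvexCCW σ n) {H : Set ℂ} (hH : Convex ℝ H)
    (hHc : Convex ℝ Hᶜ) {i j k l : ℕ} (hij : i < j) (hjk : j < k) (hkl : k < l) (hl : l < n)
    (hik : σ i ∈ H ↔ σ k ∈ H) (hjl : σ j ∈ H ↔ σ l ∈ H) : σ i ∈ H ↔ σ j ∈ H := by
  obtain ⟨z, hz₁, hz₂⟩ := segment_inter_segment_nonempty (hσ hij hjk (hkl.trans hl))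
    (hσ (hij.trans hjk) hkl hl) (hσ hij (hjk.trans hkl) hl) (hσ hjk hkl hl)
  have hik' : ∀ {C : Set ℂ}, Convex ℝ C → σ i ∈ C → σ k ∈ C → z ∈ C :=
    fun hC hi hk => hC.segment_subset hi hk hz₁
  have hjl' : ∀ {C : Set ℂ}, Convex ℝ C → σ j ∈ C → σ l ∈ C → z ∈ C :=
    fun hC hj hl => hC.segment_subset hj hl hz₂
  constructor
  · intro hi
    by_contra hj
    exact hjl' hHc hj (mt hjl.2 hj) (hik' hH hi (hik.1 hi))
  · intro hj
    by_contra hi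
    exact hik' hHc hi (mt hik.2 hi) (hjl' hH hj (hjl.1 hj))

end IsStrictlyConvexCCW

section HalfPlane

variable {E : Type*} [NormedAddCommGroup E] [InnerProductSpace ℝ E]

lemma setOf_dist_le_dist_eq (a b : E) :
    {x | dist x a ≤ dist x b} = {x | inner ℝ (b - a) x ≤ (‖b‖ ^ 2 - ‖a‖ ^ 2) / 2} := by
  ext x
  simp only [Set.mem_ofPred_eq, dist_eq_norm]
  rw [← sq_le_sq₀ (norm_nonneg _) (norm_nonneg _), norm_sub_sq_real, norm_sub_sq_real,
    inner_sub_left, real_inner_comm a x, real_inner_comm b x]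
  constructor <;> intro <;> linarith

lemma convex_setOf_dist_le_dist (a b : E) : Convex ℝ {x | dist x a ≤ dist x b} := by
  rw [setOf_dist_le_dist_eq]
  exact convex_halfSpace_le (innerₛₗ ℝ (b - a)).isLinear _

lemma convex_compl_setOf_dist_le_dist (a b : E) : Convex ℝ {x | dist x a ≤ dist x b}ᶜ := by
  rw [setOf_dist_le_dist_eq, Set.compl_ofPred]
  simp only [not_le]
  exact convex_halfSpace_gt (innerₛₗ ℝ (b - a)).isLinear _

end HalfPlane

lemma exists_Ico_of_ordConnected (P : ℕ → Prop) (n : ℕ)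
    (hP : ∀ ⦃j k l⦄, j < k → k < l → l < n → P j → P l → P k) :
    ∃ a b, a ≤ b ∧ b ≤ n ∧ ∀ t < n, (P t ↔ a ≤ t ∧ t < b) := by
  induction n with
  | zero => exact ⟨0, 0, le_rfl, le_rfl, fun t ht => absurd ht t.not_lt_zero⟩
  | succ n ih =>
    obtain ⟨a, b, hab, hbn, hPab⟩ := ih fun j k l hjk hkl hl => hP hjk hkl (hl.trans n.lt_succ_self)
    by_cases hn : P n
    · have hb : a < b → b = n := by
        intro hab'
        by_contra hne
        have hb' := (hPab (b - 1) (by omega)).2 ⟨by omega, by omega⟩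
        have := (hPab b (by omega)).1 (hP (by omega : b - 1 < b) (by omega) n.lt_succ_self hb' hn)
        omega
      refine ⟨if a < b then a else n, n + 1, by split_ifs <;> omega, le_rfl, fun t ht => ?_⟩
      rcases Nat.lt_succ_iff_lt_or_eq.1 ht with ht | rfl
      · rw [hPab t ht]
        split_ifs <;> omega
      · simp only [hn, true_iff]
        split_ifs <;> omega
    · refine ⟨a, b, hab, hbn.trans n.le_succ, fun t ht => ?_⟩
      rcases Nat.lt_succ_iff_lt_or_eq.1 ht with ht | rfl
      · exact hPab t ht
      · simp only [hn, false_iff]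
        omega

lemma exists_lt_add_mod_eq_iff {n a len t : ℕ} (ha : a ≤ n) (hlen : len ≤ n) (ht : t < n) :
    (∃ s < len, (a + s) % n = t) ↔ (a ≤ t ∧ t < a + len) ∨ t + n < a + len := by
  constructor
  · rintro ⟨s, hs, rfl⟩
    rcases lt_or_ge (a + s) n with h | h
    · rw [Nat.mod_eq_of_lt h]
      omega
    · rw [Nat.mod_eq_sub_mod h, Nat.mod_eq_of_lt (by omega)]
      omega
  · rintro (h | h)
    · exact ⟨t - a, by omega, by rw [Nat.add_sub_cancel' h.1, Nat.mod_eq_of_lt ht]⟩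
    · refine ⟨t + n - a, by omega, ?_⟩
      rw [Nat.add_sub_cancel' (by omega), Nat.add_mod_right, Nat.mod_eq_of_lt ht]

-- `hP` says that no four indices `i < j < k < l` alternate in and out of `P`.
lemma exists_cyclic_interval (P : ℕ → Prop) (n : ℕ)
    (hP : ∀ ⦃i j k l⦄, i < j → j < k → k < l → l < n → (P i ↔ P k) → (P j ↔ P l) → (P i ↔ P j)) :
    ∃ a len, len ≤ n ∧ ∀ t < n, (P t ↔ ∃ s < len, (a + s) % n = t) := by
  by_cases h0 : P 0
  · obtain ⟨a, b, hab, hbn, hPab⟩ := exists_Ico_of_ordConnected (fun t => ¬P t) n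
      fun j k l hjk hkl hl hj hl' hk => by
        rcases Nat.eq_zero_or_pos j with rfl | hj0
        · exact hj h0
        · exact hj ((hP hj0 hjk hkl hl (iff_of_true h0 hk) (iff_of_false hj hl')).1 h0)
    refine ⟨b, n - (b - a), by omega, fun t ht => ?_⟩
    rw [exists_lt_add_mod_eq_iff hbn (by omega) ht, ← not_iff_not, hPab t ht]
    omega
  · obtain ⟨a, b, hab, hbn, hPab⟩ := exists_Ico_of_ordConnected P n
      fun j k l hjk hkl hl hj hl' => by
        by_contra hk
        rcases Nat.eq_zero_or_pos j with rfl | hj0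
        · exact h0 hj
        · exact h0 ((hP hj0 hjk hkl hl (iff_of_false h0 hk) (iff_of_true hj hl')).2 hj)
    refine ⟨a, b - a, by omega, fun t ht => ?_⟩
    rw [exists_lt_add_mod_eq_iff (hab.trans hbn) (by omega) ht, hPab t ht]
    omega

section TwoCenter

variable {α : Type*} [PseudoMetricSpace α]

def twoCoverRadius (S : Finset α) (hS : S.Nonempty) (c : α × α) : ℝ :=
  S.sup' hS fun p => min (dist p c.1) (dist p c.2)

lemma twoCoverRadius_le_iff {S : Finset α} {hS : S.Nonempty} {c : α × α} {r : ℝ} :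
    twoCoverRadius S hS c ≤ r ↔ ∀ p ∈ S, dist p c.1 ≤ r ∨ dist p c.2 ≤ r := by
  simp only [twoCoverRadius, Finset.sup'_le_iff, min_le_iff]

lemma continuous_twoCoverRadius (S : Finset α) (hS : S.Nonempty) :
    Continuous (twoCoverRadius S hS) :=
  Continuous.finset_sup'_apply hS fun _ _ =>
    (continuous_const.dist continuous_fst).min (continuous_const.dist continuous_snd)

lemma exists_mem_closedBall_forall_dist_le (S : Finset α) {p₀ : α} {R : ℝ} (hR₀ : 0 ≤ R)
    (hR : ∀ p ∈ S, dist p p₀ ≤ R) (c : α) :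
    ∃ c' ∈ closedBall p₀ (2 * R), ∀ p ∈ S, dist p c' ≤ dist p c := by
  by_cases hc : dist c p₀ ≤ 2 * R
  · exact ⟨c, hc, fun _ _ => le_rfl⟩
  · refine ⟨p₀, mem_closedBall_self (by positivity), fun p hp => ?_⟩
    linarith [hR p hp, dist_triangle c p p₀, dist_comm p c]

lemma exists_forall_twoCoverRadius_le [ProperSpace α] (S : Finset α) (hS : S.Nonempty) :
    ∃ c, ∀ c', twoCoverRadius S hS c ≤ twoCoverRadius S hS c' := by
  -- The radius is not coercive (one centre may escape to infinity), so minimise over a compact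
  -- box that every pair of centres can be pulled into without increasing the radius.
  have ⟨p₀, hp₀⟩ := hS
  set R := S.sup' hS (dist · p₀)
  have hR : ∀ p ∈ S, dist p p₀ ≤ R := fun p hp => S.le_sup' (dist · p₀) hp
  have hR₀ : 0 ≤ R := dist_self p₀ ▸ hR p₀ hp₀
  set K := closedBall p₀ (2 * R) ×ˢ closedBall p₀ (2 * R)
  have hK : ∀ c, ∃ d ∈ K, twoCoverRadius S hS d ≤ twoCoverRadius S hS c := by
    intro c
    obtain ⟨d₁, hd₁, h₁⟩ := exists_mem_closedBall_forall_dist_le S hR₀ hR c.1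
    obtain ⟨d₂, hd₂, h₂⟩ := exists_mem_closedBall_forall_dist_le S hR₀ hR c.2
    refine ⟨(d₁, d₂), ⟨hd₁, hd₂⟩, twoCoverRadius_le_iff.2 fun p hp => ?_⟩
    rcases twoCoverRadius_le_iff.1 le_rfl p hp with h | h
    exacts [Or.inl ((h₁ p hp).trans h), Or.inr ((h₂ p hp).trans h)]
  obtain ⟨d, hd, -⟩ := hK (p₀, p₀)
  obtain ⟨c, -, hc⟩ := ((isCompact_closedBall _ _).prod (isCompact_closedBall _ _)).exists_isMinOn
    ⟨d, hd⟩ (continuous_twoCoverRadius S hS).continuousOn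
  refine ⟨c, fun c' => ?_⟩
  obtain ⟨d', hd', hd'c'⟩ := hK c'
  exact (hc hd').trans hd'c'

end TwoCenter

/-- For a finite set `S` of `n ≥ 2` points in convex position, there is an
optimal solution of the 2-center problem on `S` (two congruent closed disks of minimum
radius `r` covering `S`) in which the points assigned to the first disk form a contiguous
interval in the counterclockwise cyclic order of the vertices of the convex hull of `S`. -/
theorem two_center_convex_position_contiguous (S : Finset ℂ) (n : ℕ) (hn : n = S.card)
    (hn2 : 2 ≤ n)
    (hconv : ∀ p ∈ S, p ∉ convexHull ℝ ((S : Set ℂ) \ {p})) :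
    ∃ (r : ℝ) (c₁ c₂ : ℂ),
      (∀ p ∈ S, dist p c₁ ≤ r ∨ dist p c₂ ≤ r) ∧
      (∀ (r' : ℝ) (c₁' c₂' : ℂ), (∀ p ∈ S, dist p c₁' ≤ r' ∨ dist p c₂' ≤ r') → r ≤ r') ∧
      ∃ σ : ℕ → ℂ,
        (S : Set ℂ) = σ '' (Set.Iio n) ∧ Set.InjOn σ (Set.Iio n) ∧
        (∀ t < n, ∀ p ∈ S, 0 ≤ cross (σ ((t + 1) % n) - σ t) (p - σ t)) ∧
        ∃ a len : ℕ, len ≤ n ∧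
          (∀ s < len, dist (σ ((a + s) % n)) c₁ ≤ r) ∧
          (∀ t < n, (¬ ∃ s < len, (a + s) % n = t) → dist (σ t) c₂ ≤ r) := by
  subst hn
  have hS : S.Nonempty := Finset.card_pos.1 (by omega)
  obtain ⟨c, hc⟩ := exists_forall_twoCoverRadius_le S hS
  have hcov := twoCoverRadius_le_iff.1 (le_refl (twoCoverRadius S hS c))
  obtain ⟨σ, himg, hinj, hσ⟩ := exists_isStrictlyConvexCCW_enumeration S
    (convexIndependent_set_iff_notMem_convexHull_sdiff.2 hconv)
  have hσS : ∀ t < S.card, σ t ∈ S := fun t ht => by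
    rw [← Finset.mem_coe, himg]
    exact Set.mem_image_of_mem σ ht
  obtain ⟨a, len, hlen, hP⟩ := exists_cyclic_interval (fun t => σ t ∈ {z | dist z c.1 ≤ dist z c.2})
    S.card fun _ _ _ _ => hσ.mem_iff_mem_of_convex (convex_setOf_dist_le_dist _ _)
      (convex_compl_setOf_dist_le_dist _ _)
  refine ⟨twoCoverRadius S hS c, c.1, c.2, hcov,
    fun r' c₁' c₂' h => (hc (c₁', c₂')).trans (twoCoverRadius_le_iff.2 h), σ, himg, hinj, ?_,
    a, len, hlen, fun s hs => ?_, fun t ht hnot => ?_⟩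
  · intro t ht p hp
    obtain ⟨u, hu, rfl⟩ := (Set.ext_iff.1 himg p).1 hp
    exact hσ.cross_succ_nonneg ht hu
  · have ht := Nat.mod_lt (a + s) hS.card_pos
    have h₁ : dist (σ ((a + s) % S.card)) c.1 ≤ _ := (hP _ ht).2 ⟨s, hs, rfl⟩
    exact (hcov _ (hσS _ ht)).elim id h₁.trans
  · have h₂ : dist (σ t) c.2 < dist (σ t) c.1 := not_le.1 fun h => hnot ((hP t ht).1 h)
    exact (hcov _ (hσS t ht)).elim h₂.le.trans id
end
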